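/- arXiv:1905.01893 — 2 statements merged into one kernel-verified Lean document; each statement's English description precedes it below -/
import Mathlib

section
/- Let x̄ ∈ X be a feasible point of (MPOC) at which MPOC-MFCQ holds. Then there exists a neighborhood U ⊆ ℝⁿ of x̄ such that for every t > 0 and every x ∈ X(φ_FB^t) ∩ U, MFCQ holds for P(φ_FB^t) at x, i.e., the only coefficients λ_i ≥ 0 (i ∈ I^g(x)), ξ_l ≥ 0 (l ∈ I^{φ_FB^t}(x)), ρ_j ∈ ℝ (j ∈ P) with 0 = Σ λ_i ∇g_i(x) + Σ ρ_j ∇h_j(x) + Σ_{l ∈ I^{φ_FB^t}(x)} ξ_l [(1 − G_l(x)/√(G_l(x)² + H_l(x)² + 2t)) ∇G_l(x) + (1 − H_l(x)/√(G_l(x)² + H_l(x)² + 2t)) ∇H_l(x)] are all zero. -/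
noncomputable section

open Filter Topology

/-- The Fischer–Burmeister NCP-function. -/
def phiFB (v : ℝ × ℝ) : ℝ := v.1 + v.2 - Real.sqrt (v.1 ^ 2 + v.2 ^ 2)

/-- The Kanzow–Schwartz NCP-function. -/
def phiKS (v : ℝ × ℝ) : ℝ :=
  if 0 ≤ v.1 + v.2 then v.1 * v.2 else -(v.1 ^ 2 + v.2 ^ 2) / 2

/-- The smoothed Fischer–Burmeister function. -/
def phiFBt (t : ℝ) (v : ℝ × ℝ) : ℝ :=
  v.1 + v.2 - Real.sqrt (v.1 ^ 2 + v.2 ^ 2 + 2 * t)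

/-- The offset Kanzow–Schwartz function. -/
def phiKSt (t : ℝ) (v : ℝ × ℝ) : ℝ := phiKS v - t

variable {n m p q : ℕ}

/-- The feasible set `X` of (MPOC). -/
def feasMPOC (g : Fin m → (Fin n → ℝ) → ℝ) (h : Fin p → (Fin n → ℝ) → ℝ)
    (G H : Fin q → (Fin n → ℝ) → ℝ) : Set (Fin n → ℝ) :=
  {x | (∀ i, g i x ≤ 0) ∧ (∀ j, h j x = 0) ∧ ∀ l, G l x ≤ 0 ∨ H l x ≤ 0}

/-- The feasible set `X(φ^t)` of the relaxed problem P(φ^t). -/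
def relFeas (g : Fin m → (Fin n → ℝ) → ℝ) (h : Fin p → (Fin n → ℝ) → ℝ)
    (G H : Fin q → (Fin n → ℝ) → ℝ) (phit : ℝ → ℝ × ℝ → ℝ) (t : ℝ) :
    Set (Fin n → ℝ) :=
  {x | (∀ i, g i x ≤ 0) ∧ (∀ j, h j x = 0) ∧ ∀ l, phit t (G l x, H l x) ≤ 0}

/-- The feasible set of the complementarity-constrained surrogate (CC-MPOC). -/
def feasCC (g : Fin m → (Fin n → ℝ) → ℝ) (h : Fin p → (Fin n → ℝ) → ℝ)
    (G H : Fin q → (Fin n → ℝ) → ℝ) :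
    Set ((Fin n → ℝ) × (Fin q → ℝ) × (Fin q → ℝ)) :=
  {w | (∀ i, g i w.1 ≤ 0) ∧ (∀ j, h j w.1 = 0) ∧ (∀ l, G l w.1 - w.2.1 l ≤ 0) ∧
       (∀ l, H l w.1 - w.2.2 l ≤ 0) ∧ (∀ l, 0 ≤ w.2.1 l) ∧ (∀ l, 0 ≤ w.2.2 l) ∧
       ∀ l, w.2.1 l * w.2.2 l = 0}

/-- W-stationarity for (MPOC): multipliers are supported on the respective active sets
(`I^g(x)` for `lam`, `I^{0+}(x) ∪ I^{00}(x)` for `mu`, `I^{+0}(x) ∪ I^{00}(x)` for `nu`). -/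
def WStat (f : (Fin n → ℝ) → ℝ) (g : Fin m → (Fin n → ℝ) → ℝ)
    (h : Fin p → (Fin n → ℝ) → ℝ) (G H : Fin q → (Fin n → ℝ) → ℝ)
    (x : Fin n → ℝ) : Prop :=
  ∃ (lam : Fin m → ℝ) (rho : Fin p → ℝ) (mu nu : Fin q → ℝ),
    (∀ i, 0 ≤ lam i) ∧ (∀ i, g i x ≠ 0 → lam i = 0) ∧
    (∀ l, 0 ≤ mu l) ∧ (∀ l, ¬(G l x = 0 ∧ 0 ≤ H l x) → mu l = 0) ∧
    (∀ l, 0 ≤ nu l) ∧ (∀ l, ¬(H l x = 0 ∧ 0 ≤ G l x) → nu l = 0) ∧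
    fderiv ℝ f x + (∑ i, lam i • fderiv ℝ (g i) x) + (∑ j, rho j • fderiv ℝ (h j) x)
      + (∑ l, mu l • fderiv ℝ (G l) x) + (∑ l, nu l • fderiv ℝ (H l) x) = 0

/-- M-stationarity for (MPOC). -/
def MStat (f : (Fin n → ℝ) → ℝ) (g : Fin m → (Fin n → ℝ) → ℝ)
    (h : Fin p → (Fin n → ℝ) → ℝ) (G H : Fin q → (Fin n → ℝ) → ℝ)
    (x : Fin n → ℝ) : Prop :=
  ∃ (lam : Fin m → ℝ) (rho : Fin p → ℝ) (mu nu : Fin q → ℝ),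
    (∀ i, 0 ≤ lam i) ∧ (∀ i, g i x ≠ 0 → lam i = 0) ∧
    (∀ l, 0 ≤ mu l) ∧ (∀ l, ¬(G l x = 0 ∧ 0 ≤ H l x) → mu l = 0) ∧
    (∀ l, 0 ≤ nu l) ∧ (∀ l, ¬(H l x = 0 ∧ 0 ≤ G l x) → nu l = 0) ∧
    (∀ l, G l x = 0 → H l x = 0 → mu l * nu l = 0) ∧
    fderiv ℝ f x + (∑ i, lam i • fderiv ℝ (g i) x) + (∑ j, rho j • fderiv ℝ (h j) x)
      + (∑ l, mu l • fderiv ℝ (G l) x) + (∑ l, nu l • fderiv ℝ (H l) x) = 0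

/-- S-stationarity for (MPOC). -/
def SStat (f : (Fin n → ℝ) → ℝ) (g : Fin m → (Fin n → ℝ) → ℝ)
    (h : Fin p → (Fin n → ℝ) → ℝ) (G H : Fin q → (Fin n → ℝ) → ℝ)
    (x : Fin n → ℝ) : Prop :=
  ∃ (lam : Fin m → ℝ) (rho : Fin p → ℝ) (mu nu : Fin q → ℝ),
    (∀ i, 0 ≤ lam i) ∧ (∀ i, g i x ≠ 0 → lam i = 0) ∧
    (∀ l, 0 ≤ mu l) ∧ (∀ l, ¬(G l x = 0 ∧ 0 ≤ H l x) → mu l = 0) ∧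
    (∀ l, 0 ≤ nu l) ∧ (∀ l, ¬(H l x = 0 ∧ 0 ≤ G l x) → nu l = 0) ∧
    (∀ l, G l x = 0 → H l x = 0 → mu l = 0 ∧ nu l = 0) ∧
    fderiv ℝ f x + (∑ i, lam i • fderiv ℝ (g i) x) + (∑ j, rho j • fderiv ℝ (h j) x)
      + (∑ l, mu l • fderiv ℝ (G l) x) + (∑ l, nu l • fderiv ℝ (H l) x) = 0

/-- MPOC-MFCQ at `x`: positive-linear independence of the active gradients. -/
def MPOC_MFCQ (g : Fin m → (Fin n → ℝ) → ℝ) (h : Fin p → (Fin n → ℝ) → ℝ)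
    (G H : Fin q → (Fin n → ℝ) → ℝ) (x : Fin n → ℝ) : Prop :=
  ∀ (lam : Fin m → ℝ) (rho : Fin p → ℝ) (mu nu : Fin q → ℝ),
    (∀ i, 0 ≤ lam i) → (∀ i, g i x ≠ 0 → lam i = 0) →
    (∀ l, 0 ≤ mu l) → (∀ l, ¬(G l x = 0 ∧ 0 ≤ H l x) → mu l = 0) →
    (∀ l, 0 ≤ nu l) → (∀ l, ¬(H l x = 0 ∧ 0 ≤ G l x) → nu l = 0) →
    ((∑ i, lam i • fderiv ℝ (g i) x) + (∑ j, rho j • fderiv ℝ (h j) x)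
      + (∑ l, mu l • fderiv ℝ (G l) x) + (∑ l, nu l • fderiv ℝ (H l) x) = 0) →
    (∀ i, lam i = 0) ∧ (∀ j, rho j = 0) ∧ (∀ l, mu l = 0) ∧ (∀ l, nu l = 0)

/-- MPOC-LICQ at `x`: linear independence of the active gradients. -/
def MPOC_LICQ (g : Fin m → (Fin n → ℝ) → ℝ) (h : Fin p → (Fin n → ℝ) → ℝ)
    (G H : Fin q → (Fin n → ℝ) → ℝ) (x : Fin n → ℝ) : Prop :=
  ∀ (lam : Fin m → ℝ) (rho : Fin p → ℝ) (mu nu : Fin q → ℝ),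
    (∀ i, g i x ≠ 0 → lam i = 0) →
    (∀ l, ¬(G l x = 0 ∧ 0 ≤ H l x) → mu l = 0) →
    (∀ l, ¬(H l x = 0 ∧ 0 ≤ G l x) → nu l = 0) →
    ((∑ i, lam i • fderiv ℝ (g i) x) + (∑ j, rho j • fderiv ℝ (h j) x)
      + (∑ l, mu l • fderiv ℝ (G l) x) + (∑ l, nu l • fderiv ℝ (H l) x) = 0) →
    (∀ i, lam i = 0) ∧ (∀ j, rho j = 0) ∧ (∀ l, mu l = 0) ∧ (∀ l, nu l = 0)

/-- Generic first-order (KKT-type) system for the NCP-reformulation of (MPOC): multipliers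
`xi l ≥ 0` supported on the active set `𝓘(x)`, with subgradient coefficients
`(alpha l, beta l)` equal to `(1,0)` on `I^{0+}(x)`, `(0,1)` on `I^{+0}(x)`, and satisfying
`extraI00` on the biactive set `I^{00}(x)`. -/
def KKTGen (f : (Fin n → ℝ) → ℝ) (g : Fin m → (Fin n → ℝ) → ℝ)
    (h : Fin p → (Fin n → ℝ) → ℝ) (G H : Fin q → (Fin n → ℝ) → ℝ)
    (x : Fin n → ℝ) (extraI00 : ℝ → ℝ → Prop) : Prop :=
  ∃ (lam : Fin m → ℝ) (rho : Fin p → ℝ) (xi alpha beta : Fin q → ℝ),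
    (∀ i, 0 ≤ lam i) ∧ (∀ i, g i x ≠ 0 → lam i = 0) ∧
    (∀ l, 0 ≤ xi l) ∧
    (∀ l, ¬((G l x = 0 ∧ 0 ≤ H l x) ∨ (H l x = 0 ∧ 0 ≤ G l x)) → xi l = 0) ∧
    (∀ l, G l x = 0 → 0 < H l x → alpha l = 1 ∧ beta l = 0) ∧
    (∀ l, 0 < G l x → H l x = 0 → alpha l = 0 ∧ beta l = 1) ∧
    (∀ l, G l x = 0 → H l x = 0 → extraI00 (alpha l) (beta l)) ∧
    fderiv ℝ f x + (∑ i, lam i • fderiv ℝ (g i) x) + (∑ j, rho j • fderiv ℝ (h j) x)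
      + (∑ l, xi l • (alpha l • fderiv ℝ (G l) x + beta l • fderiv ℝ (H l) x)) = 0

/-- Stationarity (of W-type, refined by `extra` on the biactive set `I^{GH}`) for the
switching-constrained surrogate (SC-MPOC), after elimination of the multipliers of the
sign constraints on the slack variables. -/
def StatSC (f : (Fin n → ℝ) → ℝ) (g : Fin m → (Fin n → ℝ) → ℝ)
    (h : Fin p → (Fin n → ℝ) → ℝ) (G H : Fin q → (Fin n → ℝ) → ℝ)
    (x : Fin n → ℝ) (y z : Fin q → ℝ) (extra : ℝ → ℝ → Prop) : Prop :=
  ∃ (lam : Fin m → ℝ) (rho : Fin p → ℝ) (muT nuT : Fin q → ℝ),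
    (∀ i, 0 ≤ lam i) ∧ (∀ i, g i x ≠ 0 → lam i = 0) ∧
    (∀ l, 0 ≤ muT l) ∧ (∀ l, G l x ≠ y l → muT l = 0) ∧ (∀ l, muT l * y l = 0) ∧
    (∀ l, 0 ≤ nuT l) ∧ (∀ l, H l x ≠ z l → nuT l = 0) ∧ (∀ l, nuT l * z l = 0) ∧
    (∀ l, G l x = y l → H l x = z l → extra (muT l) (nuT l)) ∧
    fderiv ℝ f x + (∑ i, lam i • fderiv ℝ (g i) x) + (∑ j, rho j • fderiv ℝ (h j) x)
      + (∑ l, muT l • fderiv ℝ (G l) x) + (∑ l, nuT l • fderiv ℝ (H l) x) = 0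

/-- Stationarity (of W-type, refined by `extra` on the biactive set `I^{00}_CC`) for the
complementarity-constrained surrogate (CC-MPOC). -/
def StatCC (f : (Fin n → ℝ) → ℝ) (g : Fin m → (Fin n → ℝ) → ℝ)
    (h : Fin p → (Fin n → ℝ) → ℝ) (G H : Fin q → (Fin n → ℝ) → ℝ)
    (x : Fin n → ℝ) (y z : Fin q → ℝ) (extra : ℝ → ℝ → Prop) : Prop :=
  ∃ (lam : Fin m → ℝ) (rho : Fin p → ℝ) (eta theta mubar nubar : Fin q → ℝ),
    (∀ i, 0 ≤ lam i) ∧ (∀ i, g i x ≠ 0 → lam i = 0) ∧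
    (∀ l, 0 ≤ eta l) ∧ (∀ l, eta l * (G l x - y l) = 0) ∧
    (∀ l, 0 ≤ theta l) ∧ (∀ l, theta l * (H l x - z l) = 0) ∧
    (fderiv ℝ f x + (∑ i, lam i • fderiv ℝ (g i) x) + (∑ j, rho j • fderiv ℝ (h j) x)
      + (∑ l, eta l • fderiv ℝ (G l) x) + (∑ l, theta l • fderiv ℝ (H l) x) = 0) ∧
    (∀ l, y l = 0 → eta l + mubar l = 0) ∧
    (∀ l, 0 < y l → z l = 0 → eta l = 0) ∧
    (∀ l, z l = 0 → theta l + nubar l = 0) ∧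
    (∀ l, y l = 0 → 0 < z l → theta l = 0) ∧
    (∀ l, y l = 0 → z l = 0 → extra (mubar l) (nubar l))

/-!
At a point where the smoothed FB constraint is active, `G > 0`, `H > 0` and the square root
equals `G + H`, so its gradient is the convex combination `(H ∇G + G ∇H) / (G + H)`. Near `xb`
only indices with `G l xb ≥ 0` and `H l xb ≥ 0` can be active, and feasibility of `xb` makes one of
the two values vanish. On `I^{0+}(xb)` that gradient is a positive multiple of
`∇G + (G / H) ∇H`, on `I^{+0}(xb)` of `∇H + (H / G) ∇G`, and on `I^{00}(xb)` a nonnegative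
combination of `∇G` and `∇H`. These tilted gradients are continuous at `xb`, where they reduce to
the gradients of MPOC-MFCQ; and the property that a family of linear maps, continuous in `x`,
kills no nonzero point of a closed cone is open in `x`, by compactness of the cone's unit sphere.
-/

theorem eventually_forall_mem_cone_eq_zero {X V E : Type*} [TopologicalSpace X]
    [NormedAddCommGroup V] [NormedSpace ℝ V] [ProperSpace V]
    [AddCommGroup E] [Module ℝ E] [TopologicalSpace E] [T1Space E]
    {x₀ : X} {C : Set V} (hC : IsClosed C) (hCsmul : ∀ v ∈ C, ∀ r : ℝ, 0 < r → r • v ∈ C)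
    {F : X → V → E} (hF : ∀ v, ContinuousAt (fun z : X × V => F z.1 z.2) (x₀, v))
    (hFsmul : ∀ x v (r : ℝ), 0 < r → F x (r • v) = r • F x v)
    (h₀ : ∀ v ∈ C, F x₀ v = 0 → v = 0) :
    ∀ᶠ x in 𝓝 x₀, ∀ v ∈ C, F x v = 0 → v = 0 := by
  have hK : IsCompact (C ∩ Metric.sphere 0 1) := (isCompact_sphere 0 1).inter_left hC
  have hunit : ∀ᶠ x in 𝓝 x₀, ∀ v ∈ C ∩ Metric.sphere 0 1, F x v ≠ 0 := by
    refine hK.eventually_forall_of_forall_eventually fun v hv => ?_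
    have hne : F x₀ v ≠ 0 := fun h => ne_zero_of_mem_unit_sphere ⟨v, hv.2⟩ (h₀ v hv.1 h)
    exact (hF v).eventually (isOpen_ne.mem_nhds hne)
  filter_upwards [hunit] with x hx v hvC hFv
  by_contra hv
  have hr : 0 < ‖v‖⁻¹ := inv_pos.2 (norm_pos_iff.2 hv)
  refine hx (‖v‖⁻¹ • v) ⟨hCsmul v hvC _ hr, ?_⟩ ?_
  · simp [norm_smul, hv]
  · rw [hFsmul x v _ hr, hFv, smul_zero]

theorem sqrt_eq_add_of_phiFBt_eq_zero {t a b : ℝ} (hab : phiFBt t (a, b) = 0) :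
    √(a ^ 2 + b ^ 2 + 2 * t) = a + b := by
  unfold phiFBt at hab
  linarith

theorem pos_of_phiFBt_eq_zero {t a b : ℝ} (ht : 0 < t) (hab : phiFBt t (a, b) = 0) :
    0 < a ∧ 0 < b := by
  have hs := sqrt_eq_add_of_phiFBt_eq_zero hab
  have hsq : a ^ 2 + b ^ 2 + 2 * t = (a + b) ^ 2 := by
    rw [← hs, Real.sq_sqrt (by positivity)]
  have hsum : 0 < a + b := hs ▸ Real.sqrt_pos.2 (by positivity)
  have hprod : a * b = t := by linarith
  constructor <;> nlinarith

theorem phiFBt_swap (t a b : ℝ) : phiFBt t (b, a) = phiFBt t (a, b) := by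
  unfold phiFBt
  ring_nf

-- The switch on `0 < b₀` keeps `x ↦ tiltRatio (H l xb) (G l x) (H l x)` continuous at `xb`.
def tiltRatio (b₀ a b : ℝ) : ℝ := if 0 < b₀ then a / b else 0

theorem continuousAt_tiltRatio {X : Type*} [TopologicalSpace X] {f₁ f₂ : X → ℝ} {x₀ : X}
    (h₁ : ContinuousAt f₁ x₀) (h₂ : ContinuousAt f₂ x₀) :
    ContinuousAt (fun x => tiltRatio (f₂ x₀) (f₁ x) (f₂ x)) x₀ := by
  unfold tiltRatio
  split_ifs with h
  · exact h₁.div h₂ h.ne'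
  · exact continuousAt_const

-- At an active point of `phiFBt t`, the weight `1 - a / √(a² + b² + 2t)` equals `b / (a + b)`.
def tiltMultiplier (a₀ a b ξ : ℝ) : ℝ := if 0 < a₀ then 0 else ξ * (b / (a + b))

section Multipliers

variable {t a b a₀ b₀ ξ : ℝ}

theorem tiltMultiplier_nonneg (ht : 0 < t) (hact : ξ ≠ 0 → phiFBt t (a, b) = 0) (hξ : 0 ≤ ξ) :
    0 ≤ tiltMultiplier a₀ a b ξ := by
  unfold tiltMultiplier
  split_ifs
  · exact le_rfl
  rcases eq_or_ne ξ 0 with h0 | h0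
  · simp [h0]
  obtain ⟨ha, hb⟩ := pos_of_phiFBt_eq_zero ht (hact h0)
  positivity

theorem tiltMultiplier_eq_zero (ht : 0 < t) (hact : ξ ≠ 0 → phiFBt t (a, b) = 0)
    (ha : a₀ < 0 → a < 0) (hb : b₀ < 0 → b < 0)
    (hsupp : ¬(a₀ = 0 ∧ 0 ≤ b₀)) : tiltMultiplier a₀ a b ξ = 0 := by
  rcases eq_or_ne ξ 0 with h0 | h0
  · simp [tiltMultiplier, h0]
  obtain ⟨ha', hb'⟩ := pos_of_phiFBt_eq_zero ht (hact h0)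
  have ha₀ : 0 ≤ a₀ := not_lt.1 fun h => (ha h).not_gt ha'
  have hb₀ : 0 ≤ b₀ := not_lt.1 fun h => (hb h).not_gt hb'
  have ha₀' : 0 < a₀ := ha₀.lt_of_ne fun h => hsupp ⟨h.symm, hb₀⟩
  simp [tiltMultiplier, ha₀']

theorem eq_zero_of_tiltMultiplier_eq_zero (ht : 0 < t) (hact : ξ ≠ 0 → phiFBt t (a, b) = 0)
    (hfeas : a₀ ≤ 0 ∨ b₀ ≤ 0)
    (hμ : tiltMultiplier a₀ a b ξ = 0) (hν : tiltMultiplier b₀ b a ξ = 0) : ξ = 0 := by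
  by_contra h0
  obtain ⟨ha, hb⟩ := pos_of_phiFBt_eq_zero ht (hact h0)
  rcases hfeas with h | h
  · simp [tiltMultiplier, not_lt.2 h, h0, hb.ne', (add_pos ha hb).ne'] at hμ
  · simp [tiltMultiplier, not_lt.2 h, h0, ha.ne', (add_pos hb ha).ne'] at hν

theorem smul_phiFBt_grad_eq_tilted {M : Type*} [AddCommGroup M] [Module ℝ M] (A B : M)
    (ht : 0 < t) (hact : ξ ≠ 0 → phiFBt t (a, b) = 0) (hfeas : a₀ ≤ 0 ∨ b₀ ≤ 0) :
    ξ • ((1 - a / √(a ^ 2 + b ^ 2 + 2 * t)) • A + (1 - b / √(a ^ 2 + b ^ 2 + 2 * t)) • B) =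
      tiltMultiplier a₀ a b ξ • (A + tiltRatio b₀ a b • B) +
        tiltMultiplier b₀ b a ξ • (B + tiltRatio a₀ b a • A) := by
  rcases eq_or_ne ξ 0 with h0 | h0
  · simp [tiltMultiplier, h0]
  obtain ⟨ha, hb⟩ := pos_of_phiFBt_eq_zero ht (hact h0)
  rw [sqrt_eq_add_of_phiFBt_eq_zero (hact h0)]
  unfold tiltMultiplier tiltRatio
  split_ifs with h₁ h₂ h₂
  · rcases hfeas with h | h <;> linarith
  all_goals match_scalars <;> field_simp <;> ring

theorem smul_add_tiltRatio_smul_eq {M : Type*} [AddCommGroup M] [Module ℝ M] (A B : M)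
    {μ a b₀ b : ℝ} (h : μ ≠ 0 → a = 0) : μ • (A + tiltRatio b₀ a b • B) = μ • A := by
  rcases eq_or_ne μ 0 with h0 | h0
  · simp [h0]
  · simp [tiltRatio, h h0]

end Multipliers

-- Multipliers `(λ, ρ, μ, ν)` of `g`, `h`, `G` and `H`, as in `MPOC_MFCQ`.
abbrev MpocMultipliers (m p q : ℕ) : Type :=
  (Fin m → ℝ) × (Fin p → ℝ) × (Fin q → ℝ) × (Fin q → ℝ)

section Tilted

variable (g : Fin m → (Fin n → ℝ) → ℝ) (h : Fin p → (Fin n → ℝ) → ℝ)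
  (G H : Fin q → (Fin n → ℝ) → ℝ) (xb : Fin n → ℝ)

def mpocCone : Set (MpocMultipliers m p q) :=
  {v | (∀ i, 0 ≤ v.1 i) ∧ (∀ i, g i xb ≠ 0 → v.1 i = 0) ∧
    (∀ l, 0 ≤ v.2.2.1 l) ∧ (∀ l, ¬(G l xb = 0 ∧ 0 ≤ H l xb) → v.2.2.1 l = 0) ∧
    (∀ l, 0 ≤ v.2.2.2 l) ∧ (∀ l, ¬(H l xb = 0 ∧ 0 ≤ G l xb) → v.2.2.2 l = 0)}

def tiltedCombination (x : Fin n → ℝ) (v : MpocMultipliers m p q) :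
    (Fin n → ℝ) →L[ℝ] ℝ :=
  (∑ i, v.1 i • fderiv ℝ (g i) x) + (∑ j, v.2.1 j • fderiv ℝ (h j) x)
    + (∑ l, v.2.2.1 l •
        (fderiv ℝ (G l) x + tiltRatio (H l xb) (G l x) (H l x) • fderiv ℝ (H l) x))
    + (∑ l, v.2.2.2 l •
        (fderiv ℝ (H l) x + tiltRatio (G l xb) (H l x) (G l x) • fderiv ℝ (G l) x))

def tiltedMultipliers (x : Fin n → ℝ) (lam : Fin m → ℝ) (rho : Fin p → ℝ) (xi : Fin q → ℝ) :
    MpocMultipliers m p q :=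
  (lam, rho, fun l => tiltMultiplier (G l xb) (G l x) (H l x) (xi l),
    fun l => tiltMultiplier (H l xb) (H l x) (G l x) (xi l))

variable {g h G H xb}

theorem isClosed_mpocCone : IsClosed (mpocCone (p := p) g G H xb) := by
  simp only [mpocCone, Set.ofPred_and, Set.ofPred_forall]
  repeat' apply IsClosed.inter
  all_goals refine isClosed_iInter fun _ => ?_
  all_goals first
    | exact isClosed_le continuous_const (by fun_prop)
    | exact isClosed_iInter fun _ => isClosed_eq (by fun_prop) continuous_const

theorem smul_mem_mpocCone {v : MpocMultipliers m p q} (hv : v ∈ mpocCone g G H xb) {r : ℝ}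
    (hr : 0 ≤ r) :
    r • v ∈ mpocCone g G H xb := by
  obtain ⟨h₁, h₂, h₃, h₄, h₅, h₆⟩ := hv
  refine ⟨fun i => ?_, fun i hi => ?_, fun l => ?_, fun l hl => ?_, fun l => ?_, fun l hl => ?_⟩ <;>
    simp [*, mul_nonneg]

theorem tiltedCombination_smul (x : Fin n → ℝ) (v : MpocMultipliers m p q) (r : ℝ) :
    tiltedCombination g h G H xb x (r • v) = r • tiltedCombination g h G H xb x v := by
  simp only [tiltedCombination, Prod.smul_fst, Prod.smul_snd, Pi.smul_apply, smul_eq_mul,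
    mul_smul, Finset.smul_sum, smul_add]

theorem continuousAt_tiltedCombination (hg : ∀ i, ContDiff ℝ 1 (g i))
    (hh : ∀ j, ContDiff ℝ 1 (h j)) (hG : ∀ l, ContDiff ℝ 1 (G l)) (hH : ∀ l, ContDiff ℝ 1 (H l))
    (v : MpocMultipliers m p q) :
    ContinuousAt (fun z : (Fin n → ℝ) × _ => tiltedCombination g h G H xb z.1 z.2) (xb, v) := by
  have hDg i := (hg i).continuous_fderiv one_ne_zero
  have hDh j := (hh j).continuous_fderiv one_ne_zero
  have hDG l := (hG l).continuous_fderiv one_ne_zero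
  have hDH l := (hH l).continuous_fderiv one_ne_zero
  have hGr l := continuousAt_tiltRatio (x₀ := (xb, v))
    ((hG l).continuous.comp continuous_fst).continuousAt
    ((hH l).continuous.comp continuous_fst).continuousAt
  have hHr l := continuousAt_tiltRatio (x₀ := (xb, v))
    ((hH l).continuous.comp continuous_fst).continuousAt
    ((hG l).continuous.comp continuous_fst).continuousAt
  unfold tiltedCombination
  refine ((?_ : ContinuousAt _ _).add ?_ |>.add ?_ |>.add ?_) <;>
    refine tendsto_finsetSum _ fun i _ => (?_ : ContinuousAt _ _) <;> fun_prop

theorem tiltedCombination_self {v : MpocMultipliers m p q} (hv : v ∈ mpocCone g G H xb) :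
    tiltedCombination g h G H xb xb v =
      (∑ i, v.1 i • fderiv ℝ (g i) xb) + (∑ j, v.2.1 j • fderiv ℝ (h j) xb)
        + (∑ l, v.2.2.1 l • fderiv ℝ (G l) xb) + (∑ l, v.2.2.2 l • fderiv ℝ (H l) xb) := by
  obtain ⟨-, -, -, hμ, -, hν⟩ := hv
  have hGterm l := smul_add_tiltRatio_smul_eq (fderiv ℝ (G l) xb) (fderiv ℝ (H l) xb)
    (b₀ := H l xb) (b := H l xb) fun h0 => by_contra fun hne => h0 (hμ l (hne ∘ And.left))
  have hHterm l := smul_add_tiltRatio_smul_eq (fderiv ℝ (H l) xb) (fderiv ℝ (G l) xb)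
    (b₀ := G l xb) (b := G l xb) fun h0 => by_contra fun hne => h0 (hν l (hne ∘ And.left))
  simp only [tiltedCombination, hGterm, hHterm]

theorem MPOC_MFCQ.eventually_forall_mem_mpocCone_eq_zero (hmfcq : MPOC_MFCQ g h G H xb)
    (hg : ∀ i, ContDiff ℝ 1 (g i)) (hh : ∀ j, ContDiff ℝ 1 (h j))
    (hG : ∀ l, ContDiff ℝ 1 (G l)) (hH : ∀ l, ContDiff ℝ 1 (H l)) :
    ∀ᶠ x in 𝓝 xb, ∀ v ∈ mpocCone g G H xb, tiltedCombination g h G H xb x v = 0 → v = 0 := by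
  refine eventually_forall_mem_cone_eq_zero isClosed_mpocCone
    (fun v hv r hr => smul_mem_mpocCone hv hr.le)
    (continuousAt_tiltedCombination hg hh hG hH)
    (fun x v r _ => tiltedCombination_smul x v r) fun v hv h0 => ?_
  rw [tiltedCombination_self hv] at h0
  obtain ⟨hlam, hrho, hmu, hnu⟩ := hmfcq v.1 v.2.1 v.2.2.1 v.2.2.2 hv.1 hv.2.1 hv.2.2.1
    hv.2.2.2.1 hv.2.2.2.2.1 hv.2.2.2.2.2 h0
  exact Prod.ext (funext hlam) (Prod.ext (funext hrho) (Prod.ext (funext hmu) (funext hnu)))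

variable {t : ℝ} {x : Fin n → ℝ} {lam : Fin m → ℝ} {xi : Fin q → ℝ}

theorem tiltedMultipliers_mem_mpocCone (rho : Fin p → ℝ) (ht : 0 < t)
    (hlam : ∀ i, 0 ≤ lam i) (hlam_supp : ∀ i, g i x ≠ 0 → lam i = 0)
    (hxi : ∀ l, 0 ≤ xi l) (hxi_supp : ∀ l, phiFBt t (G l x, H l x) ≠ 0 → xi l = 0)
    (hgx : ∀ i, g i xb ≠ 0 → g i x ≠ 0) (hGx : ∀ l, G l xb < 0 → G l x < 0)
    (hHx : ∀ l, H l xb < 0 → H l x < 0) :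
    tiltedMultipliers G H xb x lam rho xi ∈ mpocCone g G H xb := by
  have hact l : xi l ≠ 0 → phiFBt t (G l x, H l x) = 0 := not_imp_comm.1 (hxi_supp l)
  have hact' l : xi l ≠ 0 → phiFBt t (H l x, G l x) = 0 := by
    simpa only [phiFBt_swap] using hact l
  exact ⟨hlam, fun i hi => hlam_supp i (hgx i hi),
    fun l => tiltMultiplier_nonneg ht (hact l) (hxi l),
    fun l => tiltMultiplier_eq_zero ht (hact l) (hGx l) (hHx l),
    fun l => tiltMultiplier_nonneg ht (hact' l) (hxi l),
    fun l => tiltMultiplier_eq_zero ht (hact' l) (hHx l) (hGx l)⟩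

theorem tiltedCombination_tiltedMultipliers (rho : Fin p → ℝ) (ht : 0 < t)
    (hxi_supp : ∀ l, phiFBt t (G l x, H l x) ≠ 0 → xi l = 0)
    (hfeas : ∀ l, G l xb ≤ 0 ∨ H l xb ≤ 0) :
    tiltedCombination g h G H xb x (tiltedMultipliers G H xb x lam rho xi) =
      (∑ i, lam i • fderiv ℝ (g i) x) + (∑ j, rho j • fderiv ℝ (h j) x)
        + (∑ l, xi l •
          ((1 - G l x / Real.sqrt ((G l x) ^ 2 + (H l x) ^ 2 + 2 * t)) • fderiv ℝ (G l) x
            + (1 - H l x / Real.sqrt ((G l x) ^ 2 + (H l x) ^ 2 + 2 * t)) •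
              fderiv ℝ (H l) x)) := by
  unfold tiltedCombination tiltedMultipliers
  rw [add_assoc (_ + _), ← Finset.sum_add_distrib]
  congr 1
  exact Finset.sum_congr rfl fun l _ =>
    (smul_phiFBt_grad_eq_tilted _ _ ht (not_imp_comm.1 (hxi_supp l)) (hfeas l)).symm

end Tilted

theorem regularity_smoothedFB_general {n m p q : ℕ}
    (g : Fin m → (Fin n → ℝ) → ℝ) (h : Fin p → (Fin n → ℝ) → ℝ)
    (G H : Fin q → (Fin n → ℝ) → ℝ)
    (hg : ∀ i, ContDiff ℝ 1 (g i)) (hh : ∀ j, ContDiff ℝ 1 (h j))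
    (hG : ∀ l, ContDiff ℝ 1 (G l)) (hH : ∀ l, ContDiff ℝ 1 (H l))
    (xb : Fin n → ℝ) (hxb : xb ∈ feasMPOC g h G H) (hmfcq : MPOC_MFCQ g h G H xb) :
    ∃ U ∈ nhds xb, ∀ t : ℝ, 0 < t → ∀ x ∈ relFeas g h G H phiFBt t ∩ U,
      ∀ (lam : Fin m → ℝ) (rho : Fin p → ℝ) (xi : Fin q → ℝ),
        (∀ i, 0 ≤ lam i) → (∀ i, g i x ≠ 0 → lam i = 0) →
        (∀ l, 0 ≤ xi l) → (∀ l, phiFBt t (G l x, H l x) ≠ 0 → xi l = 0) →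
        ((∑ i, lam i • fderiv ℝ (g i) x) + (∑ j, rho j • fderiv ℝ (h j) x)
          + (∑ l, xi l •
            ((1 - G l x / Real.sqrt ((G l x) ^ 2 + (H l x) ^ 2 + 2 * t)) •
                fderiv ℝ (G l) x
              + (1 - H l x / Real.sqrt ((G l x) ^ 2 + (H l x) ^ 2 + 2 * t)) •
                fderiv ℝ (H l) x)) = 0) →
        (∀ i, lam i = 0) ∧ (∀ j, rho j = 0) ∧ (∀ l, xi l = 0) := by
  have hnear : ∀ᶠ x in 𝓝 xb, (∀ i, g i xb ≠ 0 → g i x ≠ 0) ∧ (∀ l, G l xb < 0 → G l x < 0) ∧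
      (∀ l, H l xb < 0 → H l x < 0) ∧
      ∀ v ∈ mpocCone g G H xb, tiltedCombination g h G H xb x v = 0 → v = 0 := by
    refine (eventually_all.2 fun i => ?_).and ((eventually_all.2 fun l => ?_).and
        ((eventually_all.2 fun l => ?_).and
        (hmfcq.eventually_forall_mem_mpocCone_eq_zero hg hh hG hH)))
    · exact eventually_imp_distrib_left.2 (hg i).continuous.continuousAt.eventually_ne
    · exact eventually_imp_distrib_left.2
        ((hG l).continuous.continuousAt.eventually_lt continuousAt_const)
    · exact eventually_imp_distrib_left.2
        ((hH l).continuous.continuousAt.eventually_lt continuousAt_const)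
  refine ⟨_, hnear, fun t ht x hx lam rho xi hlam hlam_supp hxi hxi_supp heq => ?_⟩
  obtain ⟨hgx, hGx, hHx, hinj⟩ := hx.2
  have hv := hinj _
    (tiltedMultipliers_mem_mpocCone rho ht hlam hlam_supp hxi hxi_supp hgx hGx hHx)
    (by rw [tiltedCombination_tiltedMultipliers rho ht hxi_supp hxb.2.2, heq])
  simp only [tiltedMultipliers, Prod.ext_iff, funext_iff] at hv
  obtain ⟨hlam0, hrho0, hmu0, hnu0⟩ := hv
  exact ⟨hlam0, hrho0, fun l => eq_zero_of_tiltMultiplier_eq_zero ht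
    (not_imp_comm.1 (hxi_supp l)) (hxb.2.2 l) (hmu0 l) (hnu0 l)⟩

/-- Under MPOC-MFCQ, standard MFCQ holds for the relaxed problems P(φ_FB^t) at all
feasible points in a neighborhood of the reference point, uniformly in `t > 0`. -/
theorem regularity_smoothedFB {n m p q : ℕ} (f : (Fin n → ℝ) → ℝ)
    (g : Fin m → (Fin n → ℝ) → ℝ) (h : Fin p → (Fin n → ℝ) → ℝ)
    (G H : Fin q → (Fin n → ℝ) → ℝ)
    (hf : ContDiff ℝ 1 f) (hg : ∀ i, ContDiff ℝ 1 (g i)) (hh : ∀ j, ContDiff ℝ 1 (h j))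
    (hG : ∀ l, ContDiff ℝ 1 (G l)) (hH : ∀ l, ContDiff ℝ 1 (H l))
    (xb : Fin n → ℝ) (hxb : xb ∈ feasMPOC g h G H) (hmfcq : MPOC_MFCQ g h G H xb) :
    ∃ U ∈ nhds xb, ∀ t : ℝ, 0 < t → ∀ x ∈ relFeas g h G H phiFBt t ∩ U,
      ∀ (lam : Fin m → ℝ) (rho : Fin p → ℝ) (xi : Fin q → ℝ),
        (∀ i, 0 ≤ lam i) → (∀ i, g i x ≠ 0 → lam i = 0) →
        (∀ l, 0 ≤ xi l) → (∀ l, phiFBt t (G l x, H l x) ≠ 0 → xi l = 0) →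
        ((∑ i, lam i • fderiv ℝ (g i) x) + (∑ j, rho j • fderiv ℝ (h j) x)
          + (∑ l, xi l •
            ((1 - G l x / Real.sqrt ((G l x) ^ 2 + (H l x) ^ 2 + 2 * t)) •
                fderiv ℝ (G l) x
              + (1 - H l x / Real.sqrt ((G l x) ^ 2 + (H l x) ^ 2 + 2 * t)) •
                fderiv ℝ (H l) x)) = 0) →
        (∀ i, lam i = 0) ∧ (∀ j, rho j = 0) ∧ (∀ l, xi l = 0) :=
  regularity_smoothedFB_general g h G H hg hh hG hH xb hxb hmfcq
end
end

section
/- Let {t_k} be a sequence of positive relaxation parameters converging to zero, and for each k let x_k be a KKT point of the relaxed problem P(φ_KS^{t_k}). Suppose the sequence {x_k} converges to a point x̄ ∈ X at which MPOC-MFCQ holds. Then x̄ is a W-stationary point of (MPOC). -/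
noncomputable section

open Filter Topology

variable {n m p q : ℕ}

/-!
A KKT multiplier `ξ` of P(φ_KS^t) at `x` splits, through `∇(G H) = H ∇G + G ∇H`, into
multipliers `μ = ξ H(x)` and `ν = ξ G(x)` of the or-constraints. They are nonnegative,
`μ H(x)` and `ν G(x)` are nonnegative, `μ G(x) = ν H(x)`, and complementarity
`ξ (G(x) H(x) - t) = 0` gives `(μ G(x))² = μ ν t`; all of this survives positive rescaling.
Normalising `(1, λ, ρ, μ, ν)` and passing to a convergent subsequence yields a Fritz John
point at `x̄` whose limit multipliers satisfy `μ G(x̄) = ν H(x̄) = 0` (as `t → 0`) and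
`μ H(x̄), ν G(x̄) ≥ 0`, which are the sign conditions of W-stationarity. MPOC-MFCQ forbids
the multiplier of `f` to vanish, so dividing by it gives W-stationarity.
-/

theorem pos_pos_mul_eq_of_phiKSt_eq_zero {t a b : ℝ} (ht : 0 < t) (h : phiKSt t (a, b) = 0) :
    0 < a ∧ 0 < b ∧ a * b = t := by
  unfold phiKSt phiKS at h
  split_ifs at h with hab
  · have hab' : a * b = t := by linarith
    refine ⟨?_, ?_, hab'⟩ <;> nlinarith
  · nlinarith [sq_nonneg a, sq_nonneg b]

theorem exists_subseq_tendsto_normalize {E : Type*} [NormedAddCommGroup E] [NormedSpace ℝ E]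
    [ProperSpace E] (w : ℕ → E) (hw : ∀ k, w k ≠ 0) :
    ∃ φ : ℕ → ℕ, StrictMono φ ∧ ∃ v : E, ‖v‖ = 1 ∧
      Tendsto (fun k => ‖w (φ k)‖⁻¹ • w (φ k)) atTop (𝓝 v) := by
  obtain ⟨v, hv, φ, hφ, hlim⟩ := (isCompact_sphere (0 : E) 1).tendsto_subseq
    (x := fun k => ‖w k‖⁻¹ • w k) fun k => by simp [norm_smul, hw k]
  exact ⟨φ, hφ, v, by simpa using hv, hlim⟩

theorem eq_zero_of_mul_eq_zero_of_mul_nonneg {μ a b : ℝ} (hμ : 0 ≤ μ) (ha : μ * a = 0)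
    (hb : 0 ≤ μ * b) (hab : ¬(a = 0 ∧ 0 ≤ b)) : μ = 0 := by
  by_contra hμ0
  have hpos : 0 < μ := lt_of_le_of_ne hμ (Ne.symm hμ0)
  exact hab ⟨(mul_eq_zero.1 ha).resolve_left hμ0, nonneg_of_mul_nonneg_right hb hpos⟩

theorem orMultipliers_eq_zero_of_tendsto {μ ν a b t : ℕ → ℝ} {μ₀ ν₀ a₀ b₀ : ℝ}
    (hμ : Tendsto μ atTop (𝓝 μ₀)) (hν : Tendsto ν atTop (𝓝 ν₀))
    (ha : Tendsto a atTop (𝓝 a₀)) (hb : Tendsto b atTop (𝓝 b₀))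
    (ht : Tendsto t atTop (𝓝 0)) (hμ₀ : 0 ≤ μ₀) (hν₀ : 0 ≤ ν₀)
    (hμb : ∀ k, 0 ≤ μ k * b k) (hνa : ∀ k, 0 ≤ ν k * a k)
    (hμa : ∀ k, μ k * a k = ν k * b k) (hsq : ∀ k, (μ k * a k) ^ 2 = μ k * ν k * t k) :
    (¬(a₀ = 0 ∧ 0 ≤ b₀) → μ₀ = 0) ∧ (¬(b₀ = 0 ∧ 0 ≤ a₀) → ν₀ = 0) := by
  have hμa₀ : μ₀ * a₀ = 0 := by
    have hlim := tendsto_nhds_unique ((hμ.mul ha).pow 2)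
      (((hμ.mul hν).mul ht).congr fun k => (hsq k).symm)
    simpa using hlim
  have hνb₀ : ν₀ * b₀ = 0 :=
    hμa₀ ▸ tendsto_nhds_unique (hν.mul hb) ((hμ.mul ha).congr hμa)
  exact ⟨eq_zero_of_mul_eq_zero_of_mul_nonneg hμ₀ hμa₀ (ge_of_tendsto' (hμ.mul hb) hμb),
    eq_zero_of_mul_eq_zero_of_mul_nonneg hν₀ hνb₀ (ge_of_tendsto' (hν.mul ha) hνa)⟩

/-- Multipliers `(λ, ρ, μ, ν)` of the constraints `g`, `h`, `G`, `H` of (MPOC), in this order. -/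
abbrev Multipliers (m p q : ℕ) : Type :=
  (Fin m → ℝ) × (Fin p → ℝ) × (Fin q → ℝ) × (Fin q → ℝ)

def constraintDeriv (g : Fin m → (Fin n → ℝ) → ℝ) (h : Fin p → (Fin n → ℝ) → ℝ)
    (G H : Fin q → (Fin n → ℝ) → ℝ) (x : Fin n → ℝ) (y : Multipliers m p q) :
    (Fin n → ℝ) →L[ℝ] ℝ :=
  (∑ i, y.1 i • fderiv ℝ (g i) x) + (∑ j, y.2.1 j • fderiv ℝ (h j) x)
    + (∑ l, y.2.2.1 l • fderiv ℝ (G l) x) + (∑ l, y.2.2.2 l • fderiv ℝ (H l) x)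

structure IsWMultiplier (g : Fin m → (Fin n → ℝ) → ℝ) (G H : Fin q → (Fin n → ℝ) → ℝ)
    (x : Fin n → ℝ) (y : Multipliers m p q) : Prop where
  lam_nonneg : ∀ i, 0 ≤ y.1 i
  lam_eq_zero : ∀ i, g i x ≠ 0 → y.1 i = 0
  mu_nonneg : ∀ l, 0 ≤ y.2.2.1 l
  mu_eq_zero : ∀ l, ¬(G l x = 0 ∧ 0 ≤ H l x) → y.2.2.1 l = 0
  nu_nonneg : ∀ l, 0 ≤ y.2.2.2 l
  nu_eq_zero : ∀ l, ¬(H l x = 0 ∧ 0 ≤ G l x) → y.2.2.2 l = 0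

/-- The properties of the multipliers `(λ, ρ, ξ H, ξ G)` of a KKT point of P(φ_KS^t) that
survive positive rescaling and passage to the limit. -/
structure IsRelaxedMultiplier (g : Fin m → (Fin n → ℝ) → ℝ) (G H : Fin q → (Fin n → ℝ) → ℝ)
    (x : Fin n → ℝ) (t : ℝ) (y : Multipliers m p q) : Prop where
  lam_nonneg : ∀ i, 0 ≤ y.1 i
  lam_eq_zero : ∀ i, g i x ≠ 0 → y.1 i = 0
  mu_nonneg : ∀ l, 0 ≤ y.2.2.1 l
  nu_nonneg : ∀ l, 0 ≤ y.2.2.2 l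
  mu_mul_H_nonneg : ∀ l, 0 ≤ y.2.2.1 l * H l x
  nu_mul_G_nonneg : ∀ l, 0 ≤ y.2.2.2 l * G l x
  mu_mul_G_eq : ∀ l, y.2.2.1 l * G l x = y.2.2.2 l * H l x
  sq_mu_mul_G_eq : ∀ l, (y.2.2.1 l * G l x) ^ 2 = y.2.2.1 l * y.2.2.2 l * t

def mpocMultipliers (lam : Fin m → ℝ) (rho : Fin p → ℝ) (xi : Fin q → ℝ)
    (G H : Fin q → (Fin n → ℝ) → ℝ) (x : Fin n → ℝ) : Multipliers m p q :=
  (lam, rho, fun l => xi l * H l x, fun l => xi l * G l x)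

section

variable {f : (Fin n → ℝ) → ℝ} {g : Fin m → (Fin n → ℝ) → ℝ} {h : Fin p → (Fin n → ℝ) → ℝ}
  {G H : Fin q → (Fin n → ℝ) → ℝ}

theorem constraintDeriv_smul (x : Fin n → ℝ) (c : ℝ) (y : Multipliers m p q) :
    constraintDeriv g h G H x (c • y) = c • constraintDeriv g h G H x y := by
  simp only [constraintDeriv, Prod.smul_fst, Prod.smul_snd, Pi.smul_apply, smul_eq_mul,
    smul_add, Finset.smul_sum, smul_smul]

theorem continuous_constraintDeriv (hg : ∀ i, ContDiff ℝ 1 (g i))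
    (hh : ∀ j, ContDiff ℝ 1 (h j)) (hG : ∀ l, ContDiff ℝ 1 (G l))
    (hH : ∀ l, ContDiff ℝ 1 (H l)) :
    Continuous fun xy : (Fin n → ℝ) × Multipliers m p q => constraintDeriv g h G H xy.1 xy.2 := by
  have hg' i := (hg i).continuous_fderiv one_ne_zero
  have hh' j := (hh j).continuous_fderiv one_ne_zero
  have hG' l := (hG l).continuous_fderiv one_ne_zero
  have hH' l := (hH l).continuous_fderiv one_ne_zero
  unfold constraintDeriv
  fun_prop

theorem fderiv_add_constraintDeriv_mpocMultipliers (x : Fin n → ℝ) (lam : Fin m → ℝ)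
    (rho : Fin p → ℝ) (xi : Fin q → ℝ) :
    fderiv ℝ f x + constraintDeriv g h G H x (mpocMultipliers lam rho xi G H x)
      = fderiv ℝ f x + (∑ i, lam i • fderiv ℝ (g i) x) + (∑ j, rho j • fderiv ℝ (h j) x)
        + (∑ l, xi l • (H l x • fderiv ℝ (G l) x + G l x • fderiv ℝ (H l) x)) := by
  simp only [constraintDeriv, mpocMultipliers, smul_add, smul_smul, Finset.sum_add_distrib]
  abel

theorem IsWMultiplier.smul {x : Fin n → ℝ} {y : Multipliers m p q}
    (hy : IsWMultiplier g G H x y) {c : ℝ} (hc : 0 ≤ c) : IsWMultiplier g G H x (c • y) where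
  lam_nonneg i := mul_nonneg hc (hy.lam_nonneg i)
  lam_eq_zero i hi := by simp [hy.lam_eq_zero i hi]
  mu_nonneg l := mul_nonneg hc (hy.mu_nonneg l)
  mu_eq_zero l hl := by simp [hy.mu_eq_zero l hl]
  nu_nonneg l := mul_nonneg hc (hy.nu_nonneg l)
  nu_eq_zero l hl := by simp [hy.nu_eq_zero l hl]

theorem IsRelaxedMultiplier.smul {x : Fin n → ℝ} {t : ℝ} {y : Multipliers m p q}
    (hy : IsRelaxedMultiplier g G H x t y) {c : ℝ} (hc : 0 ≤ c) :
    IsRelaxedMultiplier g G H x t (c • y) where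
  lam_nonneg i := mul_nonneg hc (hy.lam_nonneg i)
  lam_eq_zero i hi := by simp [hy.lam_eq_zero i hi]
  mu_nonneg l := mul_nonneg hc (hy.mu_nonneg l)
  nu_nonneg l := mul_nonneg hc (hy.nu_nonneg l)
  mu_mul_H_nonneg l := by simpa [mul_assoc] using mul_nonneg hc (hy.mu_mul_H_nonneg l)
  nu_mul_G_nonneg l := by simpa [mul_assoc] using mul_nonneg hc (hy.nu_mul_G_nonneg l)
  mu_mul_G_eq l := by simp [mul_assoc, hy.mu_mul_G_eq l]
  sq_mu_mul_G_eq l := by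
    simp only [Prod.smul_fst, Prod.smul_snd, Pi.smul_apply, smul_eq_mul]
    linear_combination c ^ 2 * hy.sq_mu_mul_G_eq l

theorem isRelaxedMultiplier_mpocMultipliers {x : Fin n → ℝ} {t : ℝ} {lam : Fin m → ℝ}
    {rho : Fin p → ℝ} {xi : Fin q → ℝ} (ht : 0 < t) (hlam : ∀ i, 0 ≤ lam i)
    (hlam_supp : ∀ i, g i x ≠ 0 → lam i = 0) (hxi : ∀ l, 0 ≤ xi l)
    (hxi_supp : ∀ l, phiKSt t (G l x, H l x) ≠ 0 → xi l = 0) :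
    IsRelaxedMultiplier g G H x t (mpocMultipliers lam rho xi G H x) := by
  have hxi_H_G l : 0 ≤ xi l * H l x ∧ 0 ≤ xi l * G l x ∧
      xi l * (G l x * H l x) = xi l * t := by
    by_cases hl : phiKSt t (G l x, H l x) = 0
    · obtain ⟨hG, hH, hGH⟩ := pos_pos_mul_eq_of_phiKSt_eq_zero ht hl
      exact ⟨mul_nonneg (hxi l) hH.le, mul_nonneg (hxi l) hG.le, by rw [hGH]⟩
    · simp [hxi_supp l hl]
  refine
    { lam_nonneg := hlam
      lam_eq_zero := hlam_supp
      mu_nonneg := fun l => (hxi_H_G l).1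
      nu_nonneg := fun l => (hxi_H_G l).2.1
      mu_mul_H_nonneg := fun l => ?_
      nu_mul_G_nonneg := fun l => ?_
      mu_mul_G_eq := fun l => ?_
      sq_mu_mul_G_eq := fun l => ?_ } <;> simp only [mpocMultipliers]
  · rw [mul_assoc]; exact mul_nonneg (hxi l) (mul_self_nonneg _)
  · rw [mul_assoc]; exact mul_nonneg (hxi l) (mul_self_nonneg _)
  · ring
  · linear_combination xi l * G l x * H l x * (hxi_H_G l).2.2

theorem wStat_of_isWMultiplier {x : Fin n → ℝ} {y : Multipliers m p q}
    (hy : IsWMultiplier g G H x y) (hstat : fderiv ℝ f x + constraintDeriv g h G H x y = 0) :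
    WStat f g h G H x :=
  ⟨y.1, y.2.1, y.2.2.1, y.2.2.2, hy.lam_nonneg, hy.lam_eq_zero, hy.mu_nonneg, hy.mu_eq_zero,
    hy.nu_nonneg, hy.nu_eq_zero, by simpa only [constraintDeriv, add_assoc] using hstat⟩

theorem MPOC_MFCQ.eq_zero {x : Fin n → ℝ} {y : Multipliers m p q}
    (hmfcq : MPOC_MFCQ g h G H x) (hy : IsWMultiplier g G H x y)
    (hzero : constraintDeriv g h G H x y = 0) : y = 0 := by
  obtain ⟨hlam, hrho, hmu, hnu⟩ := hmfcq y.1 y.2.1 y.2.2.1 y.2.2.2 hy.lam_nonneg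
    hy.lam_eq_zero hy.mu_nonneg hy.mu_eq_zero hy.nu_nonneg hy.nu_eq_zero hzero
  ext <;> simp [hlam, hrho, hmu, hnu]

theorem isWMultiplier_of_tendsto (hg : ∀ i, Continuous (g i)) (hG : ∀ l, Continuous (G l))
    (hH : ∀ l, Continuous (H l)) {x : ℕ → Fin n → ℝ} {x₀ : Fin n → ℝ} {t : ℕ → ℝ}
    {y : ℕ → Multipliers m p q} {y₀ : Multipliers m p q}
    (hx : Tendsto x atTop (𝓝 x₀)) (ht : Tendsto t atTop (𝓝 0)) (hy : Tendsto y atTop (𝓝 y₀))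
    (hrel : ∀ k, IsRelaxedMultiplier g G H (x k) (t k) (y k)) :
    IsWMultiplier g G H x₀ y₀ := by
  have hlam i : Tendsto (fun k => (y k).1 i) atTop (𝓝 (y₀.1 i)) :=
    tendsto_pi_nhds.1 hy.fst_nhds i
  have hmu l : Tendsto (fun k => (y k).2.2.1 l) atTop (𝓝 (y₀.2.2.1 l)) :=
    tendsto_pi_nhds.1 hy.snd_nhds.snd_nhds.fst_nhds l
  have hnu l : Tendsto (fun k => (y k).2.2.2 l) atTop (𝓝 (y₀.2.2.2 l)) :=
    tendsto_pi_nhds.1 hy.snd_nhds.snd_nhds.snd_nhds l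
  have hmu₀ l : 0 ≤ y₀.2.2.1 l := ge_of_tendsto' (hmu l) fun k => (hrel k).mu_nonneg l
  have hnu₀ l : 0 ≤ y₀.2.2.2 l := ge_of_tendsto' (hnu l) fun k => (hrel k).nu_nonneg l
  have hor l := orMultipliers_eq_zero_of_tendsto (hmu l) (hnu l)
    (((hG l).tendsto x₀).comp hx) (((hH l).tendsto x₀).comp hx) ht (hmu₀ l) (hnu₀ l)
    (fun k => (hrel k).mu_mul_H_nonneg l) (fun k => (hrel k).nu_mul_G_nonneg l)
    (fun k => (hrel k).mu_mul_G_eq l) (fun k => (hrel k).sq_mu_mul_G_eq l)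
  refine ⟨fun i => ge_of_tendsto' (hlam i) fun k => (hrel k).lam_nonneg i, fun i hi => ?_,
    hmu₀, fun l => (hor l).1, hnu₀, fun l => (hor l).2⟩
  have hev : ∀ᶠ k in atTop, (y k).1 i = 0 :=
    ((((hg i).tendsto x₀).comp hx).eventually_ne hi).mono fun k => (hrel k).lam_eq_zero i
  exact tendsto_nhds_unique (hlam i) (tendsto_const_nhds.congr' (hev.mono fun k hk => hk.symm))

theorem exists_fritzJohn_of_tendsto (hf : ContDiff ℝ 1 f) (hg : ∀ i, ContDiff ℝ 1 (g i))
    (hh : ∀ j, ContDiff ℝ 1 (h j)) (hG : ∀ l, ContDiff ℝ 1 (G l))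
    (hH : ∀ l, ContDiff ℝ 1 (H l)) {x : ℕ → Fin n → ℝ} {x₀ : Fin n → ℝ} {t : ℕ → ℝ}
    {y : ℕ → Multipliers m p q} (hx : Tendsto x atTop (𝓝 x₀)) (ht : Tendsto t atTop (𝓝 0))
    (hrel : ∀ k, IsRelaxedMultiplier g G H (x k) (t k) (y k))
    (hstat : ∀ k, fderiv ℝ f (x k) + constraintDeriv g h G H (x k) (y k) = 0) :
    ∃ (s : ℝ) (z : Multipliers m p q), 0 ≤ s ∧ (s, z) ≠ 0 ∧ IsWMultiplier g G H x₀ z ∧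
      s • fderiv ℝ f x₀ + constraintDeriv g h G H x₀ z = 0 := by
  obtain ⟨φ, hφ, ⟨s, z⟩, hsz, hlim⟩ :=
    exists_subseq_tendsto_normalize (fun k => ((1 : ℝ), y k)) (by simp)
  set c : ℕ → ℝ := fun k => ‖((1 : ℝ), y (φ k))‖⁻¹
  have hc k : 0 < c k := inv_pos.2 (norm_pos_iff.2 (by simp))
  have hs : Tendsto c atTop (𝓝 s) := by
    simpa only [Prod.smul_fst, smul_eq_mul, mul_one] using hlim.fst_nhds
  have hz : Tendsto (fun k => c k • y (φ k)) atTop (𝓝 z) := hlim.snd_nhds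
  have hxφ := hx.comp hφ.tendsto_atTop
  refine ⟨s, z, ge_of_tendsto' hs fun k => (hc k).le, norm_ne_zero_iff.1 (by simp [hsz]),
    isWMultiplier_of_tendsto (fun i => (hg i).continuous) (fun l => (hG l).continuous)
      (fun l => (hH l).continuous) hxφ (ht.comp hφ.tendsto_atTop) hz
      fun k => (hrel (φ k)).smul (hc k).le, ?_⟩
  have hlim_stat := (hs.smul (((hf.continuous_fderiv one_ne_zero).tendsto x₀).comp hxφ)).add
    (((continuous_constraintDeriv hg hh hG hH).tendsto (x₀, z)).comp (hxφ.prodMk_nhds hz))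
  refine tendsto_nhds_unique hlim_stat (tendsto_const_nhds.congr fun k => ?_)
  simp only [Function.comp_apply, constraintDeriv_smul, ← smul_add, hstat, smul_zero]

theorem wStat_of_fritzJohn {x : Fin n → ℝ} {s : ℝ} {z : Multipliers m p q}
    (hmfcq : MPOC_MFCQ g h G H x) (hs : 0 ≤ s) (hsz : (s, z) ≠ 0)
    (hz : IsWMultiplier g G H x z) (hstat : s • fderiv ℝ f x + constraintDeriv g h G H x z = 0) :
    WStat f g h G H x := by
  have hs_pos : 0 < s := by
    refine lt_of_le_of_ne hs fun hs0 => hsz ?_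
    subst hs0
    exact Prod.ext rfl (hmfcq.eq_zero hz (by simpa using hstat))
  refine wStat_of_isWMultiplier (hz.smul (inv_nonneg.2 hs)) ?_
  rw [constraintDeriv_smul, ← inv_smul_smul₀ hs_pos.ne' (fderiv ℝ f x), ← smul_add, hstat,
    smul_zero]

end

theorem convergence_offsetKS_general {n m p q : ℕ} (f : (Fin n → ℝ) → ℝ)
    (g : Fin m → (Fin n → ℝ) → ℝ) (h : Fin p → (Fin n → ℝ) → ℝ)
    (G H : Fin q → (Fin n → ℝ) → ℝ)
    (hf : ContDiff ℝ 1 f) (hg : ∀ i, ContDiff ℝ 1 (g i)) (hh : ∀ j, ContDiff ℝ 1 (h j))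
    (hG : ∀ l, ContDiff ℝ 1 (G l)) (hH : ∀ l, ContDiff ℝ 1 (H l))
    (t : ℕ → ℝ) (ht : ∀ k, 0 < t k) (htlim : Filter.Tendsto t Filter.atTop (nhds 0))
    (x : ℕ → Fin n → ℝ)
    (hkkt : ∀ k, x k ∈ relFeas g h G H phiKSt (t k) ∧
      ∃ (lam : Fin m → ℝ) (rho : Fin p → ℝ) (xi : Fin q → ℝ),
        (∀ i, 0 ≤ lam i) ∧ (∀ i, g i (x k) ≠ 0 → lam i = 0) ∧
        (∀ l, 0 ≤ xi l) ∧ (∀ l, phiKSt (t k) (G l (x k), H l (x k)) ≠ 0 → xi l = 0) ∧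
        fderiv ℝ f (x k) + (∑ i, lam i • fderiv ℝ (g i) (x k))
          + (∑ j, rho j • fderiv ℝ (h j) (x k))
          + (∑ l, xi l •
            (H l (x k) • fderiv ℝ (G l) (x k) + G l (x k) • fderiv ℝ (H l) (x k))) = 0)
    (xb : Fin n → ℝ) (hconv : Filter.Tendsto x Filter.atTop (nhds xb))
    (hmfcq : MPOC_MFCQ g h G H xb) :
    WStat f g h G H xb := by
  choose lam rho xi hlam hlam_supp hxi hxi_supp hstat using fun k => (hkkt k).2
  obtain ⟨s, z, hs, hsz, hz, hstat_lim⟩ := exists_fritzJohn_of_tendsto hf hg hh hG hH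
    (y := fun k => mpocMultipliers (lam k) (rho k) (xi k) G H (x k)) hconv htlim
    (fun k => isRelaxedMultiplier_mpocMultipliers (ht k) (hlam k) (hlam_supp k) (hxi k)
      (hxi_supp k))
    (fun k => (fderiv_add_constraintDeriv_mpocMultipliers _ _ _ _).trans (hstat k))
  exact wStat_of_fritzJohn hmfcq hs hsz hz hstat_lim

/-- Convergence of the Scholtes-type relaxation scheme based on the offset
Kanzow–Schwartz function: limits of KKT points of P(φ_KS^{t_k}) are W-stationary for
(MPOC) under MPOC-MFCQ. -/
theorem convergence_offsetKS {n m p q : ℕ} (f : (Fin n → ℝ) → ℝ)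
    (g : Fin m → (Fin n → ℝ) → ℝ) (h : Fin p → (Fin n → ℝ) → ℝ)
    (G H : Fin q → (Fin n → ℝ) → ℝ)
    (hf : ContDiff ℝ 1 f) (hg : ∀ i, ContDiff ℝ 1 (g i)) (hh : ∀ j, ContDiff ℝ 1 (h j))
    (hG : ∀ l, ContDiff ℝ 1 (G l)) (hH : ∀ l, ContDiff ℝ 1 (H l))
    (t : ℕ → ℝ) (ht : ∀ k, 0 < t k) (htlim : Filter.Tendsto t Filter.atTop (nhds 0))
    (x : ℕ → Fin n → ℝ)
    (hkkt : ∀ k, x k ∈ relFeas g h G H phiKSt (t k) ∧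
      ∃ (lam : Fin m → ℝ) (rho : Fin p → ℝ) (xi : Fin q → ℝ),
        (∀ i, 0 ≤ lam i) ∧ (∀ i, g i (x k) ≠ 0 → lam i = 0) ∧
        (∀ l, 0 ≤ xi l) ∧ (∀ l, phiKSt (t k) (G l (x k), H l (x k)) ≠ 0 → xi l = 0) ∧
        fderiv ℝ f (x k) + (∑ i, lam i • fderiv ℝ (g i) (x k))
          + (∑ j, rho j • fderiv ℝ (h j) (x k))
          + (∑ l, xi l •
            (H l (x k) • fderiv ℝ (G l) (x k) + G l (x k) • fderiv ℝ (H l) (x k))) = 0)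
    (xb : Fin n → ℝ) (hconv : Filter.Tendsto x Filter.atTop (nhds xb))
    (hxb : xb ∈ feasMPOC g h G H) (hmfcq : MPOC_MFCQ g h G H xb) :
    WStat f g h G H xb :=
  convergence_offsetKS_general f g h G H hf hg hh hG hH t ht htlim x hkkt xb hconv hmfcq
end
end
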